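/- Playing a match within a single group cannot create a blocked cycle that avoids that group: if board B contains no blocked cycle and playing a match of group g yields board B' containing a blocked cycle C, then g is one of the groups of C. -/

import Mathlib

/-- A board is a finite multiset of isolated stacks; each stack is a list of
tile groups, with the head of the list being the top tile of the stack. -/
abbrev Board (G : Type*) := Multiset (List G)

variable {G : Type*} [DecidableEq G]

/-- The number of tiles of group `g` remaining on the board. -/
def tileCount (B : Board G) (g : G) : ℕ := (B.map (fun s => s.count g)).sum

/-- The total number of tiles on the board. -/
def totalTiles (B : Board G) : ℕ := (B.map List.length).sum

/-- The board obtained by removing the (playable) top tiles of stacks `s₁` and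
`s₂`, the remaining stacks being `rest`; emptied stacks disappear. -/
def play (s₁ s₂ : List G) (rest : Board G) : Board G :=
  Multiset.filter (fun s => s ≠ []) (s₁.tail ::ₘ s₂.tail ::ₘ rest)

/-- A legal move: remove two playable (top) tiles of the same group. -/
def Move (B B' : Board G) : Prop :=
  ∃ (g : G) (s₁ s₂ : List G) (rest : Board G),
    B = s₁ ::ₘ s₂ ::ₘ rest ∧ s₁.head? = some g ∧ s₂.head? = some g ∧
    B' = play s₁ s₂ rest

/-- A board is solvable iff some sequence of legal moves empties it. -/
def Solvable (B : Board G) : Prop := Relation.ReflTransGen Move B 0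

/-- All stacks are nonempty and of height at most two. -/
def HeightsOK (B : Board G) : Prop := ∀ s ∈ B, s ≠ [] ∧ s.length ≤ 2

/-- A blocked cycle: distinct groups `p 0, …, p k`, each with exactly two
remaining tiles, such that for each `i` there is a height-two stack with a
`p (i+1)`-tile (cyclically) on top of a `p i`-tile. -/
def BlockedCycle (B : Board G) {k : ℕ} (p : Fin (k + 1) → G) : Prop :=
  Function.Injective p ∧ (∀ i, tileCount B (p i) = 2) ∧
    ∀ i, [p (i + 1), p i] ∈ B

/-- The board contains some blocked cycle. -/
def HasBlockedCycle (B : Board G) : Prop :=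
  ∃ (k : ℕ) (p : Fin (k + 1) → G), BlockedCycle B p

lemma tileCount_cons (s : List G) (B : Board G) (h : G) :
    tileCount (s ::ₘ B) h = s.count h + tileCount B h := by
  simp [tileCount]

lemma tileCount_filter_ne_nil (B : Board G) (h : G) :
    tileCount (B.filter (fun s => s ≠ [])) h = tileCount B h := by
  induction B using Multiset.induction with
  | empty => rfl
  | cons s B ih =>
    by_cases hs : s = [] <;> simp [tileCount_cons, hs, ih]

lemma List.count_tail_of_head?_eq {s : List G} {g h : G} (hs : s.head? = some g)
    (hh : h ≠ g) : s.tail.count h = s.count h := by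
  obtain ⟨t, rfl⟩ := List.head?_eq_some_iff.mp hs
  simp [Ne.symm hh]

lemma tileCount_play_of_ne {s₁ s₂ : List G} {g h : G} (rest : Board G)
    (h1 : s₁.head? = some g) (h2 : s₂.head? = some g) (hh : h ≠ g) :
    tileCount (play s₁ s₂ rest) h = tileCount (s₁ ::ₘ s₂ ::ₘ rest) h := by
  rw [play, tileCount_filter_ne_nil, tileCount_cons, tileCount_cons, tileCount_cons,
    tileCount_cons, List.count_tail_of_head?_eq h1 hh, List.count_tail_of_head?_eq h2 hh]

lemma mem_rest_of_mem_play {α : Type*} {s₁ s₂ s : List α} {rest : Board α}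
    (hH : HeightsOK (s₁ ::ₘ s₂ ::ₘ rest)) (hs : s ∈ play s₁ s₂ rest) (hlen : 2 ≤ s.length) :
    s ∈ rest := by
  have tail_short : ∀ t ∈ s₁ ::ₘ s₂ ::ₘ rest, t.tail.length < 2 := fun t ht => by
    have := (hH t ht).2
    rw [List.length_tail]
    omega
  rw [play, Multiset.mem_filter, Multiset.mem_cons, Multiset.mem_cons] at hs
  rcases hs.1 with rfl | rfl | hrest
  · exact absurd hlen (not_le.mpr (tail_short s₁ (Multiset.mem_cons_self _ _)))
  · exact absurd hlen (not_le.mpr (tail_short s₂ (by simp)))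
  · exact hrest

/-- Stacks of height two survive a move only untouched, and tile counts of other groups do not
change, so a cycle avoiding the played group was already there. -/
theorem BlockedCycle.of_play {s₁ s₂ : List G} {rest : Board G} {g : G} {k : ℕ}
    {p : Fin (k + 1) → G} (hH : HeightsOK (s₁ ::ₘ s₂ ::ₘ rest))
    (h1 : s₁.head? = some g) (h2 : s₂.head? = some g) (hg : ∀ i, p i ≠ g)
    (hc : BlockedCycle (play s₁ s₂ rest) p) : BlockedCycle (s₁ ::ₘ s₂ ::ₘ rest) p := by
  obtain ⟨hinj, hcount, hstack⟩ := hc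
  refine ⟨hinj, fun i => ?_, fun i => ?_⟩
  · rw [← tileCount_play_of_ne rest h1 h2 (hg i)]
    exact hcount i
  · exact Multiset.mem_cons_of_mem <| Multiset.mem_cons_of_mem <|
      mem_rest_of_mem_play hH (hstack i) le_rfl

theorem stmt19_general (B : Board G) (hH : HeightsOK B)
    (hnc : ¬ HasBlockedCycle B) (g : G) (s₁ s₂ : List G) (rest : Board G)
    (hB : B = s₁ ::ₘ s₂ ::ₘ rest)
    (h1 : s₁.head? = some g) (h2 : s₂.head? = some g)
    (k : ℕ) (p : Fin (k + 1) → G)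
    (hc : BlockedCycle (play s₁ s₂ rest) p) :
    ∃ i, p i = g := by
  subst hB
  by_contra! hg
  exact hnc ⟨k, p, hc.of_play hH h1 h2 hg⟩

/-- a blocked cycle created by playing a match of group `g` on a
cycle-free board must involve `g` itself. -/
theorem stmt19 (B : Board G) (hH : HeightsOK B)
    (hs : ∀ g : G, tileCount B g = 0 ∨ tileCount B g = 2 ∨ tileCount B g = 4)
    (hnc : ¬ HasBlockedCycle B) (g : G) (s₁ s₂ : List G) (rest : Board G)
    (hB : B = s₁ ::ₘ s₂ ::ₘ rest)
    (h1 : s₁.head? = some g) (h2 : s₂.head? = some g)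
    (k : ℕ) (p : Fin (k + 1) → G)
    (hc : BlockedCycle (play s₁ s₂ rest) p) :
    ∃ i, p i = g :=
  stmt19_general B hH hnc g s₁ s₂ rest hB h1 h2 k p hc
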